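/- arXiv:1609.07581 — 2 statements merged into one kernel-verified Lean document; each statement's English description precedes it below -/
import Mathlib

section
/- For any density matrix ρ on ℂ^d ⊗ ℂ^d, any Alice POVM family E_A = {E_{a|x}} on ℂ^d, and any steering functional F = {F_{a|x}} with F_{a|x} positive semidefinite (and ω_s(F) > 0), there exist a density matrix ρ' on ℂ^d ⊗ ℂ^d and d×d unitaries U and U' such that: (i) F(T(ρ')) = ⟨Ψ_d^+| ρ' |Ψ_d^+⟩ = F(ρ') = F(ρ), and (ii) Γ_s({ρ, Ẽ_A}, F̃) ≥ Γ_s({T(ρ'), E_A}, F), where Ẽ_A = {U† E_{a|x} U}, F̃ = {U'† F_{a|x} U'}, and T(ρ') = ∫_{U(d)} (V ⊗ V*) ρ' (V ⊗ V*)† dV is the (U ⊗ U*)-twirl with respect to the Haar probability measure on the unitary group U(d), V* denoting the entrywise complex conjugate of V. -/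
open scoped ComplexOrder Kronecker Matrix
open MeasureTheory

noncomputable section

namespace QSteer

/-- Square complex matrices indexed by `ι` (the Hilbert space `ℂ^ι`). -/
abbrev HMat (ι : Type) : Type := Matrix ι ι ℂ

/-- A density matrix: positive semidefinite with unit trace. -/
def IsDensity {ι : Type} [Fintype ι] (ρ : HMat ι) : Prop :=
  ρ.PosSemidef ∧ ρ.trace = 1

/-- A POVM family `{E_{a|x}}`: positive semidefinite effects summing to the identity
for every setting `x`. -/
def IsPOVM {ι A X : Type} [Fintype ι] [Fintype A] [DecidableEq ι]
    (E : A → X → HMat ι) : Prop :=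
  (∀ a x, (E a x).PosSemidef) ∧ ∀ x, ∑ a, E a x = 1

/-- A projective measurement family: a POVM family whose effects are orthogonal
projections. -/
def IsProjPOVM {ι A X : Type} [Fintype ι] [Fintype A] [DecidableEq ι]
    (E : A → X → HMat ι) : Prop :=
  IsPOVM E ∧ ∀ a x, (E a x).IsHermitian ∧ E a x * E a x = E a x

/-- An assemblage `{σ_{a|x}}`: positive semidefinite matrices such that `∑_a σ_{a|x}`
is the same unit-trace matrix for every `x`. -/
def IsAssemblage {ι A X : Type} [Fintype ι] [Fintype A] (σ : A → X → HMat ι) : Prop :=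
  (∀ a x, (σ a x).PosSemidef) ∧ (∀ x x', ∑ a, σ a x = ∑ a, σ a x') ∧
    ∀ x, (∑ a, σ a x).trace = 1

/-- An unsteerable assemblage: one admitting a local-hidden-state model. -/
def IsUnsteerable {ι A X : Type} [Fintype ι] [Fintype A] (σ : A → X → HMat ι) : Prop :=
  ∃ (n : ℕ) (w : Fin n → ℝ) (p : A → X → Fin n → ℝ) (τ : Fin n → HMat ι),
    (∀ l, 0 ≤ w l) ∧ (∑ l, w l = 1) ∧
    (∀ a x l, 0 ≤ p a x l) ∧ (∀ x l, ∑ a, p a x l = 1) ∧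
    (∀ l, IsDensity (τ l)) ∧
    ∀ a x, σ a x = ∑ l, (w l * p a x l) • τ l

/-- A steering functional `{F_{a|x}}`: a family of positive semidefinite matrices. -/
def IsSteeringFunctional {ι A X : Type} [Fintype ι] (F : A → X → HMat ι) : Prop :=
  ∀ a x, (F a x).PosSemidef

/-- The value `∑_{a,x} tr(F_{a|x} σ_{a|x})` (real part). -/
def steeringValue {ι A X : Type} [Fintype ι] [Fintype A] [Fintype X]
    (F σ : A → X → HMat ι) : ℝ :=
  ∑ x, ∑ a, ((F a x * σ a x).trace).re

/-- The steering bound `ω_s(F)`. -/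
def steeringBound {ι A X : Type} [Fintype ι] [Fintype A] [Fintype X]
    (F : A → X → HMat ι) : ℝ :=
  sSup {r : ℝ | ∃ σ : A → X → HMat ι, IsAssemblage σ ∧ IsUnsteerable σ ∧
    r = steeringValue F σ}

/-- The steering fraction `Γ_s(σ, F)`. -/
def steeringFraction {ι A X : Type} [Fintype ι] [Fintype A] [Fintype X]
    (σ F : A → X → HMat ι) : ℝ :=
  steeringValue F σ / steeringBound F

/-- Partial trace over the first (Alice's) tensor factor. -/
def ptraceA {ιA ιB : Type} [Fintype ιA] (M : Matrix (ιA × ιB) (ιA × ιB) ℂ) : HMat ιB :=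
  Matrix.of fun j j' => ∑ i, M (i, j) (i, j')

/-- The assemblage induced by a bipartite state and Alice's POVMs:
`σ_{a|x} = Tr_A[ρ (E_{a|x} ⊗ I)]`. -/
def inducedAssemblage {ιA ιB A X : Type} [Fintype ιA] [Fintype ιB] [DecidableEq ιB]
    (ρ : Matrix (ιA × ιB) (ιA × ιB) ℂ) (E : A → X → HMat ιA) : A → X → HMat ιB :=
  fun a x => ptraceA (ρ * ((E a x) ⊗ₖ (1 : HMat ιB)))

/-- Largest steering-inequality violation `LV_s(ρ, F)` over Alice POVM families. -/
def LVs {ιA ιB A X : Type} [Fintype ιA] [Fintype ιB] [DecidableEq ιA] [DecidableEq ιB]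
    [Fintype A] [Fintype X]
    (ρ : Matrix (ιA × ιB) (ιA × ιB) ℂ) (F : A → X → HMat ιB) : ℝ :=
  sSup {r : ℝ | ∃ E : A → X → HMat ιA, IsPOVM E ∧
    r = steeringFraction (inducedAssemblage ρ E) F}

/-- Largest steering-inequality violation `LV_s^π(ρ, F)` over projective Alice families. -/
def LVsProj {ιA ιB A X : Type} [Fintype ιA] [Fintype ιB] [DecidableEq ιA] [DecidableEq ιB]
    [Fintype A] [Fintype X]
    (ρ : Matrix (ιA × ιB) (ιA × ιB) ℂ) (F : A → X → HMat ιB) : ℝ :=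
  sSup {r : ℝ | ∃ E : A → X → HMat ιA, IsProjPOVM E ∧
    r = steeringFraction (inducedAssemblage ρ E) F}

/-- The maximally entangled state `|Ψ⁺⟩⟨Ψ⁺|` on `ℂ^ι ⊗ ℂ^ι`. -/
def maxEnt (ι : Type) [Fintype ι] [DecidableEq ι] : Matrix (ι × ι) (ι × ι) ℂ :=
  Matrix.of fun pq rs => if pq.1 = pq.2 ∧ rs.1 = rs.2 then ((Fintype.card ι : ℂ))⁻¹ else 0

/-- The fully entangled fraction `F(ρ) = sup_U ⟨Ψ⁺|(U ⊗ I) ρ (U ⊗ I)†|Ψ⁺⟩`. -/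
def fef {ι : Type} [Fintype ι] [DecidableEq ι] (ρ : Matrix (ι × ι) (ι × ι) ℂ) : ℝ :=
  sSup {r : ℝ | ∃ U : Matrix ι ι ℂ, U ∈ Matrix.unitaryGroup ι ℂ ∧
    r = ((maxEnt ι * ((U ⊗ₖ (1 : HMat ι)) * ρ * ((U ⊗ₖ (1 : HMat ι))ᴴ))).trace).re}

/-- A local-hidden-variable (Bell-local) correlation. -/
def IsLHV {A B X Y : Type} [Fintype A] [Fintype B] (P : A → B → X → Y → ℝ) : Prop :=
  ∃ (n : ℕ) (w : Fin n → ℝ) (pA : A → X → Fin n → ℝ) (pB : B → Y → Fin n → ℝ),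
    (∀ l, 0 ≤ w l) ∧ (∑ l, w l = 1) ∧
    (∀ a x l, 0 ≤ pA a x l) ∧ (∀ x l, ∑ a, pA a x l = 1) ∧
    (∀ b y l, 0 ≤ pB b y l) ∧ (∀ y l, ∑ b, pB b y l = 1) ∧
    ∀ a b x y, P a b x y = ∑ l, w l * pA a x l * pB b y l

/-- The Bell value `∑ B_{ab|xy} P(a,b|x,y)`. -/
def bellValue {A B X Y : Type} [Fintype A] [Fintype B] [Fintype X] [Fintype Y]
    (Bf P : A → B → X → Y → ℝ) : ℝ :=
  ∑ x, ∑ y, ∑ a, ∑ b, Bf a b x y * P a b x y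

/-- The local bound `ω(B)`. -/
def localBound {A B X Y : Type} [Fintype A] [Fintype B] [Fintype X] [Fintype Y]
    (Bf : A → B → X → Y → ℝ) : ℝ :=
  sSup {r : ℝ | ∃ P : A → B → X → Y → ℝ, IsLHV P ∧ r = bellValue Bf P}

/-- The nonlocality fraction `Γ(P, B)`. -/
def nonlocalityFraction {A B X Y : Type} [Fintype A] [Fintype B] [Fintype X] [Fintype Y]
    (P Bf : A → B → X → Y → ℝ) : ℝ :=
  bellValue Bf P / localBound Bf

/-- The quantum correlation `P(a,b|x,y) = tr[ρ (E_{a|x} ⊗ E_{b|y})]`. -/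
def quantumCorr {ιA ιB A B X Y : Type} [Fintype ιA] [Fintype ιB]
    (ρ : Matrix (ιA × ιB) (ιA × ιB) ℂ) (EA : A → X → HMat ιA) (EB : B → Y → HMat ιB) :
    A → B → X → Y → ℝ :=
  fun a b x y => ((ρ * ((EA a x) ⊗ₖ (EB b y))).trace).re

/-- Largest Bell-inequality violation `LV(ρ, B)` over pairs of POVM families. -/
def LV {ιA ιB A B X Y : Type} [Fintype ιA] [Fintype ιB] [DecidableEq ιA] [DecidableEq ιB]
    [Fintype A] [Fintype B] [Fintype X] [Fintype Y]
    (ρ : Matrix (ιA × ιB) (ιA × ιB) ℂ) (Bf : A → B → X → Y → ℝ) : ℝ :=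
  sSup {r : ℝ | ∃ (EA : A → X → HMat ιA) (EB : B → Y → HMat ιB),
    IsPOVM EA ∧ IsPOVM EB ∧ r = nonlocalityFraction (quantumCorr ρ EA EB) Bf}

/-- Largest Bell-inequality violation `LV^π(ρ, B)` over pairs of projective families. -/
def LVProj {ιA ιB A B X Y : Type} [Fintype ιA] [Fintype ιB] [DecidableEq ιA] [DecidableEq ιB]
    [Fintype A] [Fintype B] [Fintype X] [Fintype Y]
    (ρ : Matrix (ιA × ιB) (ιA × ιB) ℂ) (Bf : A → B → X → Y → ℝ) : ℝ :=
  sSup {r : ℝ | ∃ (EA : A → X → HMat ιA) (EB : B → Y → HMat ιB),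
    IsProjPOVM EA ∧ IsProjPOVM EB ∧ r = nonlocalityFraction (quantumCorr ρ EA EB) Bf}

/-- The steering functional induced by a Bell functional and Bob's POVMs:
`F_{a|x} = ∑_{b,y} B_{ab|xy} E_{b|y}`. -/
def inducedF {ιB A B X Y : Type} [Fintype B] [Fintype Y]
    (Bf : A → B → X → Y → ℝ) (EB : B → Y → HMat ιB) : A → X → HMat ιB :=
  fun a x => ∑ y, ∑ b, Bf a b x y • EB b y

/-- The `k`-fold tensor power of a bipartite state, regrouped as a bipartite state on
`ℂ^{d^k} ⊗ ℂ^{d^k}` (Alice's factors grouped together, likewise Bob's). -/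
def tensorPower {ι : Type} (ρ : Matrix (ι × ι) (ι × ι) ℂ) (k : ℕ) :
    Matrix ((Fin k → ι) × (Fin k → ι)) ((Fin k → ι) × (Fin k → ι)) ℂ :=
  Matrix.of fun p q => ∏ t, ρ (p.1 t, p.2 t) (q.1 t, q.2 t)

/-- The isotropic state `ρ_iso(p) = p |Ψ⁺⟩⟨Ψ⁺| + (1-p) I/d²` on `ℂ^d ⊗ ℂ^d`. -/
def iso (d : ℕ) (p : ℝ) : Matrix (Fin d × Fin d) (Fin d × Fin d) ℂ :=
  p • maxEnt (Fin d) + ((1 - p) / (d : ℝ) ^ 2) • (1 : Matrix (Fin d × Fin d) (Fin d × Fin d) ℂ)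

/-- `sup_F Γ_s(σ, F)` over positive semidefinite steering functionals with positive
steering bound. -/
def supFrac {ι A X : Type} [Fintype ι] [Fintype A] [Fintype X] (σ : A → X → HMat ι) : ℝ :=
  sSup {r : ℝ | ∃ F : A → X → HMat ι, IsSteeringFunctional F ∧ 0 < steeringBound F ∧
    r = steeringFraction σ F}

/-- The optimal steering fraction `S_O(σ) = max{0, sup_F Γ_s(σ, F) − 1}`. -/
def SO {ι A X : Type} [Fintype ι] [Fintype A] [Fintype X] (σ : A → X → HMat ι) : ℝ :=
  max 0 (supFrac σ - 1)

/-- The steerable weight `S_W(σ)`. -/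
def SW {ι A X : Type} [Fintype ι] [Fintype A] [Fintype X] (σ : A → X → HMat ι) : ℝ :=
  sInf {ν : ℝ | 0 ≤ ν ∧ ν ≤ 1 ∧ ∃ σUS σS : A → X → HMat ι,
    IsAssemblage σUS ∧ IsUnsteerable σUS ∧ IsAssemblage σS ∧
    ∀ a x, σ a x = (1 - ν) • σUS a x + ν • σS a x}

/-- The steering robustness `S_R(σ)`. -/
def SR {ι A X : Type} [Fintype ι] [Fintype A] [Fintype X] (σ : A → X → HMat ι) : ℝ :=
  sInf {ν : ℝ | 0 ≤ ν ∧ ∃ τ : A → X → HMat ι, IsAssemblage τ ∧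
    IsUnsteerable (fun a x => (1 / (1 + ν)) • σ a x + (ν / (1 + ν)) • τ a x)}

/-- Separability of a bipartite state. -/
def IsSeparable {ιA ιB : Type} [Fintype ιA] [Fintype ιB]
    (ρ : Matrix (ιA × ιB) (ιA × ιB) ℂ) : Prop :=
  ∃ (n : ℕ) (w : Fin n → ℝ) (ρA : Fin n → HMat ιA) (ρB : Fin n → HMat ιB),
    (∀ l, 0 ≤ w l) ∧ (∑ l, w l = 1) ∧ (∀ l, IsDensity (ρA l)) ∧ (∀ l, IsDensity (ρB l)) ∧
    ρ = ∑ l, w l • ((ρA l) ⊗ₖ (ρB l))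

/-- The (unnormalized) output assemblage of a one-way LOCC subchannel acting on an
assemblage: `M(σ)_{a'|x'} = K (∑_{a,x} P(x|x') P(a'|x',a,x) σ_{a|x}) K†`. -/
def wired {ι ι₂ A X A' X' : Type} [Fintype ι] [Fintype A] [Fintype X]
    (K : Matrix ι₂ ι ℂ) (Px : X → X' → ℝ) (Pa : A' → X' → A → X → ℝ)
    (σ : A → X → HMat ι) : A' → X' → HMat ι₂ :=
  fun a' x' => K * (∑ x, ∑ a, (Px x x' * Pa a' x' a x) • σ a x) * Kᴴ

instance matMeasurableSpace {m n : Type} : MeasurableSpace (Matrix m n ℂ) :=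
  inferInstanceAs (MeasurableSpace (m → n → ℂ))

/-- The `(U ⊗ U*)`-twirl of a bipartite state with respect to a measure `μ` on the
unitary group (entrywise Bochner integral). -/
def twirl {ι : Type} [Fintype ι] [DecidableEq ι]
    (μ : Measure (Matrix.unitaryGroup ι ℂ)) (ρ : Matrix (ι × ι) (ι × ι) ℂ) :
    Matrix (ι × ι) (ι × ι) ℂ :=
  Matrix.of fun p q =>
    ∫ V : Matrix.unitaryGroup ι ℂ,
      ((((V : Matrix ι ι ℂ)) ⊗ₖ ((V : Matrix ι ι ℂ).map (starRingEnd ℂ))) * ρ *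
        ((((V : Matrix ι ι ℂ)) ⊗ₖ ((V : Matrix ι ι ℂ).map (starRingEnd ℂ)))ᴴ)) p q ∂μ

/-!
Rotate Alice's half of `ρ` by a unitary `U₀` attaining the fully entangled fraction: then
`ρ' = (U₀ ⊗ 1) ρ (U₀ ⊗ 1)†` satisfies `⟨Ψ⁺|ρ'|Ψ⁺⟩ = F(ρ') = F(ρ)`. Because `(V ⊗ V̄)|Ψ⁺⟩ = |Ψ⁺⟩`,
twirling keeps this overlap, and `F(T(ρ')) ≤ F(ρ')` since
`(U ⊗ 1)(V ⊗ V̄) = (V ⊗ V̄)(V†UV ⊗ 1)` and `⟨Ψ⁺|` absorbs `V ⊗ V̄`. The steering value is a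
linear functional of the state, so that of `T(ρ')` is the average over `V` of the values for
`(V ⊗ V̄) ρ' (V ⊗ V̄)†`, and some `V` is at least the average. Moving `V U₀` onto Alice's effects
and `V̄` onto Bob's functional gives the claimed pair; conjugating the functional by a unitary
does not change its steering bound.
-/

instance {m n : Type} [Countable m] [Countable n] : BorelSpace (Matrix m n ℂ) :=
  inferInstanceAs (BorelSpace (m → n → ℂ))

instance {ι : Type} [Fintype ι] [DecidableEq ι] : BorelSpace (Matrix.unitaryGroup ι ℂ) :=
  Subtype.borelSpace _

theorem _root_.Continuous.integrable_of_compactSpace {α E : Type*} [TopologicalSpace α]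
    [MeasurableSpace α] [OpensMeasurableSpace α] [CompactSpace α] [NormedAddCommGroup E]
    {μ : Measure α} [IsFiniteMeasure μ] {f : α → E} (hf : Continuous f) : Integrable f μ :=
  hf.integrable_of_hasCompactSupport (HasCompactSupport.of_compactSpace f)

section UnitaryGroup

variable {ι 𝕜 : Type} [Fintype ι] [DecidableEq ι] [RCLike 𝕜]

theorem isCompact_unitaryGroup : IsCompact (Matrix.unitaryGroup ι 𝕜 : Set (Matrix ι ι 𝕜)) :=
  (isCompact_univ_pi fun _ => isCompact_univ_pi fun _ => isCompact_closedBall (0 : 𝕜) 1)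
    |>.of_isClosed_subset (isClosed_unitary (R := Matrix ι ι 𝕜)) fun U hU i _ j _ => by
      simpa using entry_norm_bound_of_unitary hU i j

instance : CompactSpace (Matrix.unitaryGroup ι 𝕜) :=
  isCompact_iff_compactSpace.mp isCompact_unitaryGroup

end UnitaryGroup

theorem trace_conj_mul {n : Type} [Fintype n] (K X G : Matrix n n ℂ) :
    (K * X * Kᴴ * G).trace = (X * (Kᴴ * G * K)).trace := by
  rw [mul_assoc, mul_assoc, Matrix.trace_mul_comm]
  simp only [mul_assoc]

section Algebra

variable {ι : Type} [Fintype ι] [DecidableEq ι]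

abbrev kronConj (V : Matrix ι ι ℂ) : Matrix (ι × ι) (ι × ι) ℂ :=
  V ⊗ₖ V.map (starRingEnd ℂ)

theorem maxEnt_conjTranspose : (maxEnt ι)ᴴ = maxEnt ι := by
  ext p q
  simp only [Matrix.conjTranspose_apply, maxEnt, Matrix.of_apply, and_comm]
  split <;> simp

theorem maxEnt_mul_kronConj {V : Matrix ι ι ℂ} (hV : V ∈ Matrix.unitaryGroup ι ℂ) :
    maxEnt ι * kronConj V = maxEnt ι := by
  have hcol (j k : ι) : ∑ i, V i j * starRingEnd ℂ (V i k) = if j = k then 1 else 0 := by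
    simpa [Matrix.mul_apply, Matrix.one_apply, mul_comm, eq_comm] using
      congrFun (congrFun (Matrix.mem_unitaryGroup_iff'.mp hV) k) j
  ext ⟨p₁, p₂⟩ ⟨q₁, q₂⟩
  by_cases hp : p₁ = p₂
  · simp [Matrix.mul_apply, maxEnt, Fintype.sum_prod_type, hp, ite_and, ← Finset.mul_sum, hcol]
  · simp [Matrix.mul_apply, maxEnt, hp]

end Algebra

section Twirl

variable {ι : Type} [Fintype ι] [DecidableEq ι]

theorem continuous_kronConj_conj (ρ : Matrix (ι × ι) (ι × ι) ℂ) :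
    Continuous fun V : Matrix.unitaryGroup ι ℂ =>
      kronConj (V : Matrix ι ι ℂ) * ρ * (kronConj (V : Matrix ι ι ℂ))ᴴ := by
  have hV : Continuous fun V : Matrix.unitaryGroup ι ℂ => kronConj (V : Matrix ι ι ℂ) :=
    continuous_matrix fun p q => (continuous_subtype_val.matrix_elem p.1 q.1).mul
      (Complex.continuous_conj.comp (continuous_subtype_val.matrix_elem p.2 q.2))
  exact (hV.matrix_mul continuous_const).matrix_mul hV.matrix_conjTranspose

theorem trace_integral_mul {α n : Type*} [MeasurableSpace α] [Fintype n] {μ : Measure α}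
    {M : α → Matrix n n ℂ} (hM : ∀ p q, Integrable (fun a => M a p q) μ) (G : Matrix n n ℂ) :
    ((Matrix.of fun p q => ∫ a, M a p q ∂μ) * G).trace = ∫ a, (M a * G).trace ∂μ := by
  have hint (p q : n) : Integrable (fun a => M a p q * G q p) μ := (hM p q).mul_const _
  simp only [Matrix.trace, Matrix.diag, Matrix.mul_apply, Matrix.of_apply]
  rw [integral_finsetSum _ fun p _ => integrable_finsetSum _ fun q _ => hint p q]
  refine Finset.sum_congr rfl fun p _ => ?_
  rw [integral_finsetSum _ fun q _ => hint p q]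
  simp only [integral_mul_const]

theorem re_trace_twirl_mul (μ : Measure (Matrix.unitaryGroup ι ℂ)) [IsFiniteMeasure μ]
    (ρ G : Matrix (ι × ι) (ι × ι) ℂ) :
    ((twirl μ ρ * G).trace).re =
      ∫ V : Matrix.unitaryGroup ι ℂ,
        ((kronConj (V : Matrix ι ι ℂ) * ρ * (kronConj (V : Matrix ι ι ℂ))ᴴ * G).trace).re ∂μ := by
  have hcont := continuous_kronConj_conj ρ
  rw [twirl, trace_integral_mul fun p q => (hcont.matrix_elem p q).integrable_of_compactSpace,
    ← RCLike.re_eq_complex_re, ← integral_re]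
  exact (hcont.matrix_mul continuous_const).matrix_trace.integrable_of_compactSpace

theorem exists_re_trace_twirl_mul_le (μ : Measure (Matrix.unitaryGroup ι ℂ))
    [IsProbabilityMeasure μ] (ρ G : Matrix (ι × ι) (ι × ι) ℂ) :
    ∃ V : Matrix.unitaryGroup ι ℂ, ((twirl μ ρ * G).trace).re ≤
      ((kronConj (V : Matrix ι ι ℂ) * ρ * (kronConj (V : Matrix ι ι ℂ))ᴴ * G).trace).re := by
  rw [re_trace_twirl_mul]
  exact exists_integral_le (Complex.continuous_re.comp ((continuous_kronConj_conj ρ).matrix_mul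
    continuous_const).matrix_trace).integrable_of_compactSpace

end Twirl

section FullyEntangledFraction

variable {ι : Type} [Fintype ι] [DecidableEq ι]

def maxEntOverlap (ρ : Matrix (ι × ι) (ι × ι) ℂ) : ℝ :=
  ((maxEnt ι * ρ).trace).re

def aliceConj (U : Matrix ι ι ℂ) (ρ : Matrix (ι × ι) (ι × ι) ℂ) : Matrix (ι × ι) (ι × ι) ℂ :=
  (U ⊗ₖ (1 : HMat ι)) * ρ * (U ⊗ₖ (1 : HMat ι))ᴴ

theorem maxEntOverlap_kronConj_conj {V : Matrix ι ι ℂ} (hV : V ∈ Matrix.unitaryGroup ι ℂ)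
    (ρ : Matrix (ι × ι) (ι × ι) ℂ) :
    maxEntOverlap (kronConj V * ρ * (kronConj V)ᴴ) = maxEntOverlap ρ := by
  have hleft : (kronConj V)ᴴ * maxEnt ι = maxEnt ι := by
    rw [← maxEnt_conjTranspose, ← Matrix.conjTranspose_mul, maxEnt_conjTranspose,
      maxEnt_mul_kronConj hV, maxEnt_conjTranspose]
  rw [maxEntOverlap, ← mul_assoc, ← mul_assoc, maxEnt_mul_kronConj hV, Matrix.trace_mul_cycle,
    hleft, maxEntOverlap]

theorem aliceConj_one (ρ : Matrix (ι × ι) (ι × ι) ℂ) : aliceConj 1 ρ = ρ := by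
  simp [aliceConj]

theorem aliceConj_aliceConj (U W : Matrix ι ι ℂ) (ρ : Matrix (ι × ι) (ι × ι) ℂ) :
    aliceConj U (aliceConj W ρ) = aliceConj (U * W) ρ := by
  have h : (U ⊗ₖ (1 : HMat ι)) * (W ⊗ₖ (1 : HMat ι)) = (U * W) ⊗ₖ (1 : HMat ι) := by
    rw [← Matrix.mul_kronecker_mul, one_mul]
  simp only [aliceConj, ← h, Matrix.conjTranspose_mul, mul_assoc]

theorem maxEntOverlap_aliceConj (U : Matrix ι ι ℂ) (ρ : Matrix (ι × ι) (ι × ι) ℂ) :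
    maxEntOverlap (aliceConj U ρ) =
      ((ρ * ((U ⊗ₖ (1 : HMat ι))ᴴ * maxEnt ι * (U ⊗ₖ (1 : HMat ι)))).trace).re := by
  rw [maxEntOverlap, Matrix.trace_mul_comm, aliceConj, trace_conj_mul]

theorem aliceConj_kronConj_conj {V : Matrix ι ι ℂ} (hV : V ∈ Matrix.unitaryGroup ι ℂ)
    (U : Matrix ι ι ℂ) (ρ : Matrix (ι × ι) (ι × ι) ℂ) :
    aliceConj U (kronConj V * ρ * (kronConj V)ᴴ) =
      kronConj V * aliceConj (Vᴴ * U * V) ρ * (kronConj V)ᴴ := by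
  have hcomm : (U ⊗ₖ (1 : HMat ι)) * kronConj V = kronConj V * ((Vᴴ * U * V) ⊗ₖ 1) := by
    rw [← Matrix.mul_kronecker_mul, ← Matrix.mul_kronecker_mul, one_mul, mul_one, ← mul_assoc,
      ← mul_assoc, ← Matrix.star_eq_conjTranspose, Matrix.mem_unitaryGroup_iff.mp hV, one_mul]
  simp only [aliceConj, ← mul_assoc, hcomm]
  simp only [mul_assoc, ← Matrix.conjTranspose_mul, hcomm]

theorem continuous_maxEntOverlap_aliceConj (ρ : Matrix (ι × ι) (ι × ι) ℂ) :
    Continuous fun V : Matrix.unitaryGroup ι ℂ =>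
      maxEntOverlap (aliceConj (V : Matrix ι ι ℂ) ρ) := by
  have hk : Continuous fun V : Matrix.unitaryGroup ι ℂ => (V : Matrix ι ι ℂ) ⊗ₖ (1 : HMat ι) :=
    continuous_matrix fun p q => (continuous_subtype_val.matrix_elem p.1 q.1).mul continuous_const
  exact Complex.continuous_re.comp (continuous_const.matrix_mul
    ((hk.matrix_mul continuous_const).matrix_mul hk.matrix_conjTranspose)).matrix_trace

theorem fef_eq_iSup (ρ : Matrix (ι × ι) (ι × ι) ℂ) :
    fef ρ = ⨆ V : Matrix.unitaryGroup ι ℂ, maxEntOverlap (aliceConj (V : Matrix ι ι ℂ) ρ) := by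
  refine congrArg sSup (Set.ext fun r => ⟨?_, ?_⟩)
  · rintro ⟨U, hU, rfl⟩
    exact ⟨⟨U, hU⟩, rfl⟩
  · rintro ⟨V, rfl⟩
    exact ⟨V, V.2, rfl⟩

theorem maxEntOverlap_aliceConj_le_fef (ρ : Matrix (ι × ι) (ι × ι) ℂ)
    (V : Matrix.unitaryGroup ι ℂ) : maxEntOverlap (aliceConj (V : Matrix ι ι ℂ) ρ) ≤ fef ρ :=
  fef_eq_iSup ρ ▸ le_ciSup (isCompact_range (continuous_maxEntOverlap_aliceConj ρ)).bddAbove V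

theorem maxEntOverlap_le_fef (ρ : Matrix (ι × ι) (ι × ι) ℂ) : maxEntOverlap ρ ≤ fef ρ := by
  simpa [aliceConj_one] using maxEntOverlap_aliceConj_le_fef ρ 1

theorem exists_maxEntOverlap_aliceConj_eq_fef (ρ : Matrix (ι × ι) (ι × ι) ℂ) :
    ∃ V : Matrix.unitaryGroup ι ℂ, maxEntOverlap (aliceConj (V : Matrix ι ι ℂ) ρ) = fef ρ := by
  obtain ⟨V, -, hV⟩ := isCompact_univ.exists_isMaxOn Set.univ_nonempty
    (continuous_maxEntOverlap_aliceConj ρ).continuousOn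
  refine ⟨V, le_antisymm (maxEntOverlap_aliceConj_le_fef ρ V) ?_⟩
  rw [fef_eq_iSup]
  exact ciSup_le fun W => hV (Set.mem_univ W)

theorem fef_aliceConj (U : Matrix.unitaryGroup ι ℂ) (ρ : Matrix (ι × ι) (ι × ι) ℂ) :
    fef (aliceConj (U : Matrix ι ι ℂ) ρ) = fef ρ := by
  rw [fef_eq_iSup, fef_eq_iSup, ← (Equiv.mulRight U).iSup_comp
    (g := fun W : Matrix.unitaryGroup ι ℂ => maxEntOverlap (aliceConj (W : Matrix ι ι ℂ) ρ))]
  simp only [Equiv.coe_mulRight, Submonoid.coe_mul, aliceConj_aliceConj]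

end FullyEntangledFraction

section TwirlFullyEntangledFraction

variable {ι : Type} [Fintype ι] [DecidableEq ι]
variable (μ : Measure (Matrix.unitaryGroup ι ℂ)) [IsProbabilityMeasure μ]

theorem maxEntOverlap_twirl (ρ : Matrix (ι × ι) (ι × ι) ℂ) :
    maxEntOverlap (twirl μ ρ) = maxEntOverlap ρ := by
  have hconst (V : Matrix.unitaryGroup ι ℂ) :
      ((kronConj (V : Matrix ι ι ℂ) * ρ * (kronConj (V : Matrix ι ι ℂ))ᴴ * maxEnt ι).trace).re =
        maxEntOverlap ρ := by
    rw [Matrix.trace_mul_comm]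
    exact maxEntOverlap_kronConj_conj V.2 ρ
  rw [maxEntOverlap, Matrix.trace_mul_comm, re_trace_twirl_mul]
  simp only [hconst, integral_const, probReal_univ, one_smul]

theorem fef_twirl_le (ρ : Matrix (ι × ι) (ι × ι) ℂ) : fef (twirl μ ρ) ≤ fef ρ := by
  rw [fef_eq_iSup]
  refine ciSup_le fun U => ?_
  obtain ⟨V, hV⟩ := exists_re_trace_twirl_mul_le μ ρ
    (((U : Matrix ι ι ℂ) ⊗ₖ (1 : HMat ι))ᴴ * maxEnt ι * ((U : Matrix ι ι ℂ) ⊗ₖ (1 : HMat ι)))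
  rw [← maxEntOverlap_aliceConj, ← maxEntOverlap_aliceConj, aliceConj_kronConj_conj V.2,
    maxEntOverlap_kronConj_conj V.2] at hV
  exact hV.trans (maxEntOverlap_aliceConj_le_fef ρ (V⁻¹ * U * V))

end TwirlFullyEntangledFraction

section Steering

variable {ι A X : Type} [Fintype ι] [Fintype A]

theorem IsDensity.conj_unitary [DecidableEq ι] {G : Matrix ι ι ℂ}
    (hG : G ∈ Matrix.unitaryGroup ι ℂ) {τ : HMat ι} (hτ : IsDensity τ) :
    IsDensity (G * τ * Gᴴ) := by
  refine ⟨hτ.1.mul_mul_conjTranspose_same G, ?_⟩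
  rw [Matrix.trace_mul_cycle, ← Matrix.star_eq_conjTranspose, Matrix.mem_unitaryGroup_iff'.mp hG,
    one_mul, hτ.2]

theorem IsAssemblage.conj_unitary [DecidableEq ι] {G : Matrix ι ι ℂ}
    (hG : G ∈ Matrix.unitaryGroup ι ℂ) {σ : A → X → HMat ι} (hσ : IsAssemblage σ) :
    IsAssemblage fun a x => G * σ a x * Gᴴ := by
  obtain ⟨hpsd, hsum, htr⟩ := hσ
  have hconj (x : X) : ∑ a, G * σ a x * Gᴴ = G * (∑ a, σ a x) * Gᴴ := by
    rw [Finset.mul_sum, Finset.sum_mul]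
  refine ⟨fun a x => (hpsd a x).mul_mul_conjTranspose_same G, fun x x' => ?_, fun x => ?_⟩
  · rw [hconj, hconj, hsum x x']
  · rw [hconj]
    exact (IsDensity.conj_unitary hG ⟨Matrix.posSemidef_sum _ fun a _ => hpsd a x, htr x⟩).2

theorem IsUnsteerable.conj_unitary [DecidableEq ι] {G : Matrix ι ι ℂ}
    (hG : G ∈ Matrix.unitaryGroup ι ℂ) {σ : A → X → HMat ι} (hσ : IsUnsteerable σ) :
    IsUnsteerable fun a x => G * σ a x * Gᴴ := by
  obtain ⟨n, w, p, τ, hw, hw1, hp, hp1, hτ, hσ⟩ := hσ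
  refine ⟨n, w, p, fun l => G * τ l * Gᴴ, hw, hw1, hp, hp1,
    fun l => (hτ l).conj_unitary hG, fun a x => ?_⟩
  simp only [hσ a x, Finset.mul_sum, Finset.sum_mul, mul_smul_comm, smul_mul_assoc]

theorem steeringValue_conj [Fintype X] (G : Matrix ι ι ℂ) (F σ : A → X → HMat ι) :
    steeringValue (fun a x => Gᴴ * F a x * G) σ = steeringValue F fun a x => G * σ a x * Gᴴ := by
  refine Finset.sum_congr rfl fun x _ => Finset.sum_congr rfl fun a _ => ?_
  rw [mul_assoc, Matrix.trace_mul_comm, ← mul_assoc, ← mul_assoc, Matrix.trace_mul_comm]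
  simp only [mul_assoc]

theorem steeringBound_conj [DecidableEq ι] [Fintype X] {G : Matrix ι ι ℂ}
    (hG : G ∈ Matrix.unitaryGroup ι ℂ) (F : A → X → HMat ι) :
    steeringBound (fun a x => Gᴴ * F a x * G) = steeringBound F := by
  have hG' : Gᴴ ∈ Matrix.unitaryGroup ι ℂ := Unitary.star_mem hG
  refine congrArg sSup (Set.ext fun r => ⟨?_, ?_⟩)
  · rintro ⟨σ, hσ, hσ', rfl⟩
    exact ⟨_, hσ.conj_unitary hG, hσ'.conj_unitary hG, steeringValue_conj G F σ⟩
  · rintro ⟨σ, hσ, hσ', rfl⟩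
    refine ⟨_, by simpa using hσ.conj_unitary hG', by simpa using hσ'.conj_unitary hG', ?_⟩
    have hGG : G * Gᴴ = 1 := Matrix.mem_unitaryGroup_iff.mp hG
    simp only [steeringValue_conj, ← mul_assoc, hGG, one_mul]
    simp only [mul_assoc, hGG, mul_one]

end Steering

section InducedAssemblage

variable {ιA ιB A X : Type} [Fintype ιA] [Fintype ιB] [DecidableEq ιA]

theorem trace_mul_ptraceA (Q : HMat ιB) (N : Matrix (ιA × ιB) (ιA × ιB) ℂ) :
    (Q * ptraceA N).trace = (N * ((1 : HMat ιA) ⊗ₖ Q)).trace := by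
  simp only [Matrix.trace, ptraceA, Matrix.diag_apply, Matrix.mul_apply, Matrix.of_apply,
    Finset.mul_sum, Matrix.kroneckerMap_apply, Matrix.one_apply, ite_mul, one_mul, zero_mul,
    mul_ite, mul_zero, Fintype.sum_prod_type, Finset.sum_ite_irrel, Finset.sum_const_zero,
    Finset.sum_ite_eq', Finset.mem_univ, ↓reduceIte]
  rw [Finset.sum_comm]
  conv_rhs => rw [Finset.sum_comm]
  refine Finset.sum_congr rfl fun j _ => ?_
  rw [Finset.sum_comm]
  exact Finset.sum_congr rfl fun k _ => Finset.sum_congr rfl fun i _ => mul_comm _ _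

theorem steeringValue_inducedAssemblage [DecidableEq ιB] [Fintype A] [Fintype X]
    (F : A → X → HMat ιB) (ρ : Matrix (ιA × ιB) (ιA × ιB) ℂ) (E : A → X → HMat ιA) :
    steeringValue F (inducedAssemblage ρ E) = ((ρ * ∑ x, ∑ a, E a x ⊗ₖ F a x).trace).re := by
  simp only [steeringValue, inducedAssemblage, trace_mul_ptraceA, mul_assoc,
    ← Matrix.mul_kronecker_mul, mul_one, one_mul, Matrix.mul_sum, Matrix.trace_sum,
    Complex.re_sum]

theorem steeringValue_inducedAssemblage_kronecker_conj [DecidableEq ιB] [Fintype A] [Fintype X]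
    (F : A → X → HMat ιB) (ρ : Matrix (ιA × ιB) (ιA × ιB) ℂ) (E : A → X → HMat ιA)
    (P : HMat ιA) (Q : HMat ιB) :
    steeringValue F (inducedAssemblage ((P ⊗ₖ Q) * ρ * (P ⊗ₖ Q)ᴴ) E) =
      steeringValue (fun a x => Qᴴ * F a x * Q)
        (inducedAssemblage ρ fun a x => Pᴴ * E a x * P) := by
  rw [steeringValue_inducedAssemblage, steeringValue_inducedAssemblage, trace_conj_mul]
  simp only [Matrix.mul_sum, Matrix.sum_mul, Matrix.conjTranspose_kronecker,
    ← Matrix.mul_kronecker_mul]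

end InducedAssemblage

theorem exists_steeringValue_twirl_le {ι A X : Type} [Fintype ι] [DecidableEq ι] [Fintype A]
    [Fintype X] (μ : Measure (Matrix.unitaryGroup ι ℂ)) [IsProbabilityMeasure μ]
    (ρ : Matrix (ι × ι) (ι × ι) ℂ) (U : Matrix ι ι ℂ) (E F : A → X → HMat ι) :
    ∃ V : Matrix.unitaryGroup ι ℂ,
      steeringValue F (inducedAssemblage (twirl μ (aliceConj U ρ)) E) ≤
        steeringValue
          (fun a x => ((V : Matrix ι ι ℂ).map star)ᴴ * F a x * (V : Matrix ι ι ℂ).map star)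
          (inducedAssemblage ρ fun a x =>
            ((V : Matrix ι ι ℂ) * U)ᴴ * E a x * ((V : Matrix ι ι ℂ) * U)) := by
  obtain ⟨V, hV⟩ := exists_re_trace_twirl_mul_le μ (aliceConj U ρ) (∑ x, ∑ a, E a x ⊗ₖ F a x)
  refine ⟨V, ?_⟩
  have hkron : kronConj (V : Matrix ι ι ℂ) * (U ⊗ₖ (1 : HMat ι)) =
      ((V : Matrix ι ι ℂ) * U) ⊗ₖ (V : Matrix ι ι ℂ).map star := by
    rw [← Matrix.mul_kronecker_mul, mul_one]
    rfl
  rw [← steeringValue_inducedAssemblage_kronecker_conj, steeringValue_inducedAssemblage,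
    steeringValue_inducedAssemblage, ← hkron, Matrix.conjTranspose_mul]
  simpa only [aliceConj, mul_assoc] using hV

theorem stmt2_general {A X : Type} [Fintype A] [Fintype X]
    (d : ℕ)
    (ρ : Matrix (Fin d × Fin d) (Fin d × Fin d) ℂ) (hρ : IsDensity ρ)
    (E : A → X → HMat (Fin d))
    (F : A → X → HMat (Fin d))
    (hωs : 0 < steeringBound F)
    (μ : Measure (Matrix.unitaryGroup (Fin d) ℂ)) [IsProbabilityMeasure μ] :
    ∃ (ρ' : Matrix (Fin d × Fin d) (Fin d × Fin d) ℂ)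
      (U U' : Matrix (Fin d) (Fin d) ℂ),
      IsDensity ρ' ∧
      U ∈ Matrix.unitaryGroup (Fin d) ℂ ∧ U' ∈ Matrix.unitaryGroup (Fin d) ℂ ∧
      fef (twirl μ ρ') = ((maxEnt (Fin d) * ρ').trace).re ∧
      ((maxEnt (Fin d) * ρ').trace).re = fef ρ' ∧
      fef ρ' = fef ρ ∧
      steeringFraction
          (inducedAssemblage ρ (fun a x => Uᴴ * E a x * U))
          (fun a x => U'ᴴ * F a x * U') ≥
        steeringFraction (inducedAssemblage (twirl μ ρ') E) F := by
  obtain ⟨U₀, hU₀⟩ := exists_maxEntOverlap_aliceConj_eq_fef ρ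
  set ρ' := aliceConj (U₀ : Matrix (Fin d) (Fin d) ℂ) ρ
  have hfef : fef ρ' = fef ρ := fef_aliceConj U₀ ρ
  have hoverlap : maxEntOverlap ρ' = fef ρ' := hU₀.trans hfef.symm
  have hfef_twirl : fef (twirl μ ρ') = maxEntOverlap ρ' :=
    le_antisymm ((fef_twirl_le μ ρ').trans hoverlap.ge)
      (maxEntOverlap_twirl μ ρ' ▸ maxEntOverlap_le_fef (twirl μ ρ'))
  obtain ⟨V, hV⟩ := exists_steeringValue_twirl_le μ ρ U₀ E F
  have hV' : (V : Matrix (Fin d) (Fin d) ℂ).map star ∈ Matrix.unitaryGroup (Fin d) ℂ :=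
    Matrix.map_star_mem_unitaryGroup_iff.mpr V.2
  refine ⟨ρ', V * U₀, _, hρ.conj_unitary (Matrix.kronecker_mem_unitary U₀.2 (one_mem _)),
    mul_mem V.2 U₀.2, hV', hfef_twirl, hoverlap, hfef, ?_⟩
  rw [ge_iff_le, steeringFraction, steeringFraction, steeringBound_conj hV']
  exact div_le_div_of_nonneg_right hV hωs.le

/-- Lemma 1: for any state `ρ`, Alice POVMs `E` and positive semidefinite
steering functional `F` on `ℂ^d ⊗ ℂ^d`, there are a state `ρ'` and unitaries `U`, `U'`
such that the fully entangled fraction is preserved through twirling and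
`Γ_s({ρ, Ẽ_A}, F̃) ≥ Γ_s({T(ρ'), E_A}, F)`.  The twirl is taken with respect to the Haar
probability measure on the unitary group, characterized as a left-invariant Borel
probability measure `μ`. -/
theorem stmt2 {A X : Type} [Fintype A] [Fintype X] [Nonempty A] [Nonempty X]
    (d : ℕ) (hd : 0 < d)
    (ρ : Matrix (Fin d × Fin d) (Fin d × Fin d) ℂ) (hρ : IsDensity ρ)
    (E : A → X → HMat (Fin d)) (hE : IsPOVM E)
    (F : A → X → HMat (Fin d)) (hF : IsSteeringFunctional F)
    (hωs : 0 < steeringBound F)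
    (μ : Measure (Matrix.unitaryGroup (Fin d) ℂ)) [IsProbabilityMeasure μ]
    [μ.IsMulLeftInvariant] :
    ∃ (ρ' : Matrix (Fin d × Fin d) (Fin d × Fin d) ℂ)
      (U U' : Matrix (Fin d) (Fin d) ℂ),
      IsDensity ρ' ∧
      U ∈ Matrix.unitaryGroup (Fin d) ℂ ∧ U' ∈ Matrix.unitaryGroup (Fin d) ℂ ∧
      fef (twirl μ ρ') = ((maxEnt (Fin d) * ρ').trace).re ∧
      ((maxEnt (Fin d) * ρ').trace).re = fef ρ' ∧
      fef ρ' = fef ρ ∧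
      steeringFraction
          (inducedAssemblage ρ (fun a x => Uᴴ * E a x * U))
          (fun a x => U'ᴴ * F a x * U') ≥
        steeringFraction (inducedAssemblage (twirl μ ρ') E) F :=
  stmt2_general d ρ hρ E F hωs μ

end QSteer

end
end

section
/- Let σ be an assemblage with steerable weight S_W(σ) and let σ_{a|x} = [1 − S_W(σ)] σ^{US}_{a|x} + S_W(σ) σ^S_{a|x} be an optimal decomposition, where σ^{US} is an unsteerable assemblage and σ^S is an assemblage. Then S_O(σ) ≤ S_W(σ) · S_O(σ^S) ≤ S_O(σ) + 2[1 − S_W(σ)], where S_O denotes the optimal steering fraction. -/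
open scoped ComplexOrder Kronecker Matrix
open MeasureTheory

noncomputable section

namespace QSteer

/-! `Γ_s(·, F)` is linear, so the decomposition gives
`Γ_s(σ, F) = (1 - S_W) Γ_s(σ^US, F) + S_W Γ_s(σ^S, F)`. An unsteerable assemblage has
`Γ_s ≤ 1`, and taking suprema over `F` gives the first inequality; the first summand is
nonnegative, so `S_W Γ_s(σ^S, F) ≤ Γ_s(σ, F)`, which gives the second. The suprema are finite
because the uniform-noise assemblage `ρ / |A|` is unsteerable, which bounds every steering
fraction of an assemblage by `|A|`. -/

lemma _root_.Matrix.PosSemidef.re_trace_mul_nonneg {n : Type*} [Fintype n] {M N : Matrix n n ℂ}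
    (hM : M.PosSemidef) (hN : N.PosSemidef) : 0 ≤ (M * N).trace.re := by
  classical
  obtain ⟨C, rfl⟩ : ∃ C : Matrix n n ℂ, N = Cᴴ * C := by
    open scoped MatrixOrder in exact CStarAlgebra.nonneg_iff_eq_star_mul_self.mp hN.nonneg
  rw [← Matrix.mul_assoc, Matrix.trace_mul_cycle]
  exact (Complex.nonneg_iff.mp (hM.mul_mul_conjTranspose_same C).trace_nonneg).1

section Steering

variable {ι A X : Type} [Fintype ι] [Fintype A]

lemma IsAssemblage.isDensity_sum {σ : A → X → HMat ι} (hσ : IsAssemblage σ) (x : X) :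
    IsDensity (∑ a, σ a x) :=
  ⟨Matrix.posSemidef_sum _ fun a _ => hσ.1 a x, hσ.2.2 x⟩

lemma IsAssemblage.nonempty {σ : A → X → HMat ι} (hσ : IsAssemblage σ) [Nonempty X] :
    Nonempty A := by
  by_contra hA
  have := hσ.2.2 (Classical.arbitrary X)
  simp [not_nonempty_iff.mp hA] at this

variable (A X) in
def noiseAssemblage (ρ : HMat ι) : A → X → HMat ι :=
  fun _ _ => (Fintype.card A : ℝ)⁻¹ • ρ

lemma isAssemblage_noiseAssemblage [Nonempty A] {ρ : HMat ι} (hρ : IsDensity ρ) :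
    IsAssemblage (noiseAssemblage A X ρ) := by
  refine ⟨fun _ _ => hρ.1.smul (by positivity), fun _ _ => rfl, fun _ => ?_⟩
  simp [noiseAssemblage, Matrix.trace_smul, hρ.2]

lemma isUnsteerable_noiseAssemblage [Nonempty A] {ρ : HMat ι} (hρ : IsDensity ρ) :
    IsUnsteerable (noiseAssemblage A X ρ) := by
  refine ⟨1, fun _ => 1, fun _ _ _ => (Fintype.card A : ℝ)⁻¹, fun _ => ρ, fun _ => zero_le_one,
    by simp, fun _ _ _ => by positivity, fun _ _ => by simp, fun _ => hρ, fun _ _ => by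
    simp [noiseAssemblage]⟩

variable [Fintype X]

lemma steeringValue_nonneg {F σ : A → X → HMat ι} (hF : IsSteeringFunctional F)
    (hσ : ∀ a x, (σ a x).PosSemidef) : 0 ≤ steeringValue F σ :=
  Finset.sum_nonneg fun x _ => Finset.sum_nonneg fun a _ => (hF a x).re_trace_mul_nonneg (hσ a x)

lemma steeringValue_of_eq_add_smul {F σ τ υ : A → X → HMat ι} {r s : ℝ}
    (h : ∀ a x, σ a x = r • τ a x + s • υ a x) :
    steeringValue F σ = r * steeringValue F τ + s * steeringValue F υ := by
  simp only [steeringValue, h, Matrix.mul_add, Matrix.mul_smul, Matrix.trace_add,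
    Matrix.trace_smul, Complex.add_re, Complex.smul_re, smul_eq_mul, Finset.sum_add_distrib,
    Finset.mul_sum]

lemma steeringFraction_of_eq_add_smul {F σ τ υ : A → X → HMat ι} {r s : ℝ}
    (h : ∀ a x, σ a x = r • τ a x + s • υ a x) :
    steeringFraction σ F = r * steeringFraction τ F + s * steeringFraction υ F := by
  simp only [steeringFraction, steeringValue_of_eq_add_smul h, add_div, mul_div_assoc]

lemma steeringFraction_nonneg {F σ : A → X → HMat ι} (hF : IsSteeringFunctional F)
    (hω : 0 < steeringBound F) (hσ : ∀ a x, (σ a x).PosSemidef) : 0 ≤ steeringFraction σ F :=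
  div_nonneg (steeringValue_nonneg hF hσ) hω.le

/-- A real `sSup` of a set that is not bounded above is `0`, so a positive steering bound
certifies boundedness. -/
lemma bddAbove_of_steeringBound_pos {F : A → X → HMat ι} (hω : 0 < steeringBound F) :
    BddAbove {r : ℝ | ∃ σ : A → X → HMat ι, IsAssemblage σ ∧ IsUnsteerable σ ∧
      r = steeringValue F σ} := by
  by_contra h
  rw [steeringBound, Real.sSup_of_not_bddAbove h] at hω
  exact hω.false

lemma steeringValue_le_steeringBound {F σ : A → X → HMat ι} (hω : 0 < steeringBound F)
    (hσ : IsAssemblage σ) (hσu : IsUnsteerable σ) : steeringValue F σ ≤ steeringBound F :=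
  le_csSup (bddAbove_of_steeringBound_pos hω) ⟨σ, hσ, hσu, rfl⟩

lemma steeringFraction_le_one {F σ : A → X → HMat ι} (hω : 0 < steeringBound F)
    (hσ : IsAssemblage σ) (hσu : IsUnsteerable σ) : steeringFraction σ F ≤ 1 :=
  (div_le_one hω).mpr (steeringValue_le_steeringBound hω hσ hσu)

lemma steeringFraction_le_card {F σ : A → X → HMat ι} (hF : IsSteeringFunctional F)
    (hω : 0 < steeringBound F) (hσ : IsAssemblage σ) :
    steeringFraction σ F ≤ Fintype.card A := by
  rcases isEmpty_or_nonempty X with hX | hX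
  · simp [steeringFraction, steeringValue]
  have := hσ.nonempty
  set ρ := ∑ a, σ a (Classical.arbitrary X)
  have hρ : IsDensity ρ := hσ.isDensity_sum _
  have hle : steeringValue F σ ≤ steeringValue F fun _ _ => ρ := by
    refine Finset.sum_le_sum fun x _ => Finset.sum_le_sum fun a _ => ?_
    rw [show ρ = ∑ a', σ a' x from hσ.2.1 _ x, Matrix.mul_sum, Matrix.trace_sum, Complex.re_sum]
    exact Finset.single_le_sum (f := fun a' => (F a x * σ a' x).trace.re)
      (fun a' _ => (hF a x).re_trace_mul_nonneg (hσ.1 a' x)) (Finset.mem_univ a)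
  have hnoise : steeringValue F (noiseAssemblage A X ρ) =
      (Fintype.card A : ℝ)⁻¹ * steeringValue F fun _ _ => ρ := by
    simp [steeringValue, noiseAssemblage, Matrix.trace_smul, Finset.mul_sum]
  have hbound := steeringValue_le_steeringBound hω (isAssemblage_noiseAssemblage (X := X) hρ)
    (isUnsteerable_noiseAssemblage hρ)
  rw [hnoise, inv_mul_le_iff₀ (by positivity)] at hbound
  rw [steeringFraction, div_le_iff₀ hω]
  exact hle.trans hbound

lemma bddAbove_steeringFraction {σ : A → X → HMat ι} (hσ : IsAssemblage σ) :
    BddAbove {r : ℝ | ∃ F : A → X → HMat ι, IsSteeringFunctional F ∧ 0 < steeringBound F ∧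
      r = steeringFraction σ F} :=
  ⟨Fintype.card A, by rintro _ ⟨F, hF, hω, rfl⟩; exact steeringFraction_le_card hF hω hσ⟩

lemma steeringFraction_le_one_add_SO {F σ : A → X → HMat ι} (hF : IsSteeringFunctional F)
    (hω : 0 < steeringBound F) (hσ : IsAssemblage σ) :
    steeringFraction σ F ≤ 1 + SO σ := by
  have hsup : steeringFraction σ F ≤ supFrac σ :=
    le_csSup (bddAbove_steeringFraction hσ) ⟨F, hF, hω, rfl⟩
  have := le_max_right 0 (supFrac σ - 1)
  rw [SO]
  linarith

lemma mul_supFrac_le {σ : A → X → HMat ι} {ν c : ℝ} (hν : 0 ≤ ν) (hc : 0 ≤ c)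
    (h : ∀ F, IsSteeringFunctional F → 0 < steeringBound F → ν * steeringFraction σ F ≤ c) :
    ν * supFrac σ ≤ c := by
  rcases hν.eq_or_lt with rfl | hν
  · simpa using hc
  rw [← le_div_iff₀' hν]
  refine Real.sSup_le ?_ (div_nonneg hc hν.le)
  rintro _ ⟨F, hF, hω, rfl⟩
  exact (le_div_iff₀' hν).mpr (h F hF hω)

lemma SW_mem_Icc {σ σUS : A → X → HMat ι} (hσ : IsAssemblage σ) (hUS : IsAssemblage σUS)
    (hUSu : IsUnsteerable σUS) : SW σ ∈ Set.Icc 0 1 := by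
  have hone : (1 : ℝ) ∈ {ν : ℝ | 0 ≤ ν ∧ ν ≤ 1 ∧ ∃ σUS σS : A → X → HMat ι,
      IsAssemblage σUS ∧ IsUnsteerable σUS ∧ IsAssemblage σS ∧
      ∀ a x, σ a x = (1 - ν) • σUS a x + ν • σS a x} :=
    ⟨zero_le_one, le_rfl, σUS, σ, hUS, hUSu, hσ, fun _ _ => by simp⟩
  exact ⟨le_csInf ⟨1, hone⟩ fun _ h => h.1, csInf_le ⟨0, fun _ h => h.1⟩ hone⟩

variable {σ σUS σS : A → X → HMat ι} {ν : ℝ}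

lemma SO_le_mul_SO_of_decomposition (hν : ν ∈ Set.Icc 0 1) (hUS : IsAssemblage σUS)
    (hUSu : IsUnsteerable σUS) (hS : IsAssemblage σS)
    (hdec : ∀ a x, σ a x = (1 - ν) • σUS a x + ν • σS a x) :
    SO σ ≤ ν * SO σS := by
  have hSO : 0 ≤ ν * SO σS := mul_nonneg hν.1 (le_max_left _ _)
  have hsup : 1 * supFrac σ ≤ 1 + ν * SO σS := by
    refine mul_supFrac_le zero_le_one (by linarith) fun F hF hω => ?_
    rw [one_mul, steeringFraction_of_eq_add_smul hdec]
    have := add_le_add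
      (mul_le_mul_of_nonneg_left (steeringFraction_le_one hω hUS hUSu) (sub_nonneg.mpr hν.2))
      (mul_le_mul_of_nonneg_left (steeringFraction_le_one_add_SO hF hω hS) hν.1)
    linarith
  exact max_le hSO (by linarith)

lemma mul_SO_le_SO_add_of_decomposition (hν : ν ∈ Set.Icc 0 1) (hσ : IsAssemblage σ)
    (hUS : ∀ a x, (σUS a x).PosSemidef) (hdec : ∀ a x, σ a x = (1 - ν) • σUS a x + ν • σS a x) :
    ν * SO σS ≤ SO σ + (1 - ν) := by
  have hSO : 0 ≤ SO σ := le_max_left _ _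
  have hsup : ν * supFrac σS ≤ 1 + SO σ := by
    refine mul_supFrac_le hν.1 (by linarith) fun F hF hω => ?_
    have hsplit := steeringFraction_of_eq_add_smul (F := F) hdec
    have hUSpart := mul_nonneg (sub_nonneg.mpr hν.2) (steeringFraction_nonneg hF hω hUS)
    have hσF := steeringFraction_le_one_add_SO hF hω hσ
    linarith
  rw [SO, mul_max_of_nonneg _ _ hν.1]
  exact max_le (by linarith [hν.2]) (by linarith)

end Steering

/-- Proposition 1: for an optimal steerable-weight decomposition
`σ = (1 − S_W(σ)) σ^US + S_W(σ) σ^S`,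
`S_O(σ) ≤ S_W(σ)·S_O(σ^S) ≤ S_O(σ) + 2(1 − S_W(σ))`. -/
theorem stmt13 {ι A X : Type} [Fintype ι] [Fintype A] [Fintype X]
    (σ σUS σS : A → X → HMat ι)
    (hσ : IsAssemblage σ) (hUS : IsAssemblage σUS) (hUSu : IsUnsteerable σUS)
    (hS : IsAssemblage σS)
    (hdec : ∀ a x, σ a x = (1 - SW σ) • σUS a x + SW σ • σS a x) :
    SO σ ≤ SW σ * SO σS ∧ SW σ * SO σS ≤ SO σ + 2 * (1 - SW σ) := by
  have hν := SW_mem_Icc hσ hUS hUSu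
  have hsecond := mul_SO_le_SO_add_of_decomposition hν hσ hUS.1 hdec
  exact ⟨SO_le_mul_SO_of_decomposition hν hUS hUSu hS hdec, by linarith [hν.2]⟩

end QSteer

end
end
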